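/- arXiv:1008.3614 — 3 statements merged into one kernel-verified Lean document; each statement's English description precedes it below -/
import Mathlib

section
/- Let N and m be positive integers, let D > 0 be a real number, and let s : Fin N → ℝ be task durations with 0 < s n ≤ D for every n. Then the following are equivalent: (i) there exist start times t : Fin N → ℝ with 0 ≤ t n and t n + s n ≤ D for every n, such that for every x ∈ [0, D) the number of indices n with x ∈ [t n, t n + s n) is at most m; (ii) there exists an assignment f : Fin N → Fin m such that for every bin j, the sum of s n over all n with f n = j is at most D. -/
open Finset MeasureTheory

/-!
(i) ⇒ (ii): colour the task intervals greedily in order of start time. When the task with the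
latest start is coloured, the other tasks overlapping it all contain its start point, so at most
`m - 1` colours are blocked. Each colour class is then a family of disjoint subintervals of
`[0, D]`, and their lengths add up to at most `D` by additivity of Lebesgue measure.

(ii) ⇒ (i): lay the items of each bin end to end from time `0`. Tasks running at a common
instant then come from distinct bins, so there are at most `m` of them.
-/

theorem sum_le_of_pairwiseDisjoint_Ico {ι : Type*} (B : Finset ι) {a b : ℝ} (hab : a ≤ b)
    (t s : ι → ℝ) (hs : ∀ i ∈ B, 0 ≤ s i) (hsub : ∀ i ∈ B, a ≤ t i ∧ t i + s i ≤ b)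
    (hdisj : (B : Set ι).PairwiseDisjoint fun i => Set.Ico (t i) (t i + s i)) :
    ∑ i ∈ B, s i ≤ b - a := by
  have hvol : ∑ i ∈ B, ENNReal.ofReal (s i) ≤ ENNReal.ofReal (b - a) :=
    calc ∑ i ∈ B, ENNReal.ofReal (s i)
        = volume (⋃ i ∈ B, Set.Ico (t i) (t i + s i)) := by
          rw [measure_biUnion_finset hdisj fun _ _ => measurableSet_Ico]
          simp [Real.volume_Ico]
      _ ≤ volume (Set.Ico a b) :=
          measure_mono <| Set.iUnion₂_subset fun i hi =>
            Set.Ico_subset_Ico (hsub i hi).1 (hsub i hi).2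
      _ = ENNReal.ofReal (b - a) := Real.volume_Ico
  rwa [← ENNReal.ofReal_sum_of_nonneg hs,
    ENNReal.ofReal_le_ofReal_iff (sub_nonneg.2 hab)] at hvol

theorem exists_fin_coloring_Ico {ι : Type*} {m : ℕ} (hm : 0 < m) (l r : ι → ℝ) (F : Finset ι)
    (hlr : ∀ i ∈ F, l i < r i)
    (hload : ∀ i ∈ F, #(F.filter fun j => l j ≤ l i ∧ l i < r j) ≤ m) :
    ∃ f : ι → Fin m, ∀ i ∈ F, ∀ j ∈ F, i ≠ j → f i = f j →
      Disjoint (Set.Ico (l i) (r i)) (Set.Ico (l j) (r j)) := by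
  classical
  induction F using Finset.induction_on_max_value l with
  | empty => exact ⟨fun _ => ⟨0, hm⟩, by simp⟩
  | insert a F haF hmax ih =>
    obtain ⟨f, hf⟩ := ih (fun i hi => hlr i (mem_insert_of_mem hi)) fun i hi =>
      (card_le_card (filter_subset_filter _ (subset_insert a F))).trans
        (hload i (mem_insert_of_mem hi))
    set C := F.filter fun j => l a < r j
    have hC : insert a C = (insert a F).filter fun j => l j ≤ l a ∧ l a < r j := by
      ext j
      simp only [C, mem_insert, mem_filter]
      constructor
      · rintro (rfl | ⟨hj, hlt⟩)
        · exact ⟨Or.inl rfl, le_rfl, hlr j (mem_insert_self j F)⟩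
        · exact ⟨Or.inr hj, hmax j hj, hlt⟩
      · rintro ⟨rfl | hj, -, hlt⟩
        exacts [Or.inl rfl, Or.inr ⟨hj, hlt⟩]
    have hCm : #(C.image f) < #(univ : Finset (Fin m)) := by
      have := hload a (mem_insert_self a F)
      rw [← hC, card_insert_of_notMem fun h => haF (mem_filter.1 h).1] at this
      simpa using card_image_le.trans_lt (Nat.lt_of_succ_le this)
    obtain ⟨c, -, hc⟩ := exists_mem_notMem_of_card_lt_card hCm
    have hfree : ∀ j ∈ F, f j = c → Disjoint (Set.Ico (l a) (r a)) (Set.Ico (l j) (r j)) := by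
      intro j hj hfj
      have hrj : r j ≤ l a :=
        not_lt.1 fun h => hc (hfj ▸ mem_image_of_mem f (mem_filter.2 ⟨hj, h⟩))
      exact Set.disjoint_left.2 fun x hxa hxj => absurd (hxj.2.trans_le hrj) (not_lt.2 hxa.1)
    refine ⟨Function.update f a c, ?_⟩
    intro i hi j hj hij hfij
    rcases mem_insert.1 hi with rfl | hiF <;> rcases mem_insert.1 hj with rfl | hjF
    · exact absurd rfl hij
    · rw [Function.update_self, Function.update_of_ne (ne_of_mem_of_not_mem hjF haF)] at hfij
      exact hfree j hjF hfij.symm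
    · rw [Function.update_self, Function.update_of_ne (ne_of_mem_of_not_mem hiF haF)] at hfij
      exact (hfree i hiF hfij).symm
    · rw [Function.update_of_ne (ne_of_mem_of_not_mem hiF haF),
        Function.update_of_ne (ne_of_mem_of_not_mem hjF haF)] at hfij
      exact hf i hiF j hjF hij hfij

section Stacking

variable {ι κ : Type*} [Fintype ι] [LinearOrder ι] [DecidableEq κ] (f : ι → κ) (s : ι → ℝ)

def stackStart (n : ι) : ℝ :=
  ∑ k ∈ univ.filter (fun k => f k = f n ∧ k < n), s k

theorem stackStart_add_self (n : ι) :
    stackStart f s n + s n = ∑ k ∈ univ.filter (fun k => f k = f n ∧ k ≤ n), s k := by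
  rw [stackStart, add_comm, ← sum_insert (by simp)]
  congr 1
  ext k
  simp only [mem_insert, mem_filter, mem_univ, true_and, le_iff_lt_or_eq]
  tauto

variable {f s}

theorem stackStart_nonneg (hs : ∀ n, 0 ≤ s n) (n : ι) : 0 ≤ stackStart f s n :=
  sum_nonneg fun k _ => hs k

theorem stackStart_add_le_sum (hs : ∀ n, 0 ≤ s n) (n : ι) :
    stackStart f s n + s n ≤ ∑ k ∈ univ.filter (fun k => f k = f n), s k := by
  rw [stackStart_add_self]
  exact sum_le_sum_of_subset_of_nonneg (monotone_filter_right _ fun _ _ h => h.1)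
    fun k _ _ => hs k

theorem stackStart_add_le_of_lt (hs : ∀ n, 0 ≤ s n) {i j : ι} (hf : f i = f j) (hij : i < j) :
    stackStart f s i + s i ≤ stackStart f s j := by
  rw [stackStart_add_self]
  refine sum_le_sum_of_subset_of_nonneg (fun k hk => ?_) fun k _ _ => hs k
  simp only [mem_filter, mem_univ, true_and] at hk ⊢
  exact ⟨hk.1.trans hf, hk.2.trans_lt hij⟩

theorem stackStart_injOn_active (hs : ∀ n, 0 ≤ s n) (x : ℝ) :
    Set.InjOn f ↑(univ.filter fun n => stackStart f s n ≤ x ∧ x < stackStart f s n + s n) := by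
  intro i hi j hj hfij
  simp only [coe_filter, mem_univ, true_and, Set.mem_ofPred_eq] at hi hj
  by_contra hne
  rcases lt_or_gt_of_ne hne with hij | hji
  · linarith [stackStart_add_le_of_lt hs hfij hij]
  · linarith [stackStart_add_le_of_lt hs hfij.symm hji]

end Stacking

theorem stmt_0_general (N m : ℕ) (hm : 0 < m) (D : ℝ) (hD : 0 < D)
    (s : Fin N → ℝ) (hs : ∀ n, 0 < s n ∧ s n ≤ D) :
    (∃ t : Fin N → ℝ, (∀ n, 0 ≤ t n ∧ t n + s n ≤ D) ∧
        ∀ x ∈ Set.Ico (0 : ℝ) D,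
          (Finset.univ.filter (fun n => t n ≤ x ∧ x < t n + s n)).card ≤ m) ↔
    (∃ f : Fin N → Fin m, ∀ j : Fin m,
        ∑ n ∈ Finset.univ.filter (fun n => f n = j), s n ≤ D) := by
  constructor
  · rintro ⟨t, ht, hload⟩
    obtain ⟨f, hf⟩ := exists_fin_coloring_Ico hm t (fun n => t n + s n) univ
      (fun n _ => lt_add_of_pos_right _ (hs n).1)
      fun i _ => hload (t i) ⟨(ht i).1, by linarith [(ht i).2, (hs i).1]⟩
    refine ⟨f, fun c => ?_⟩
    simpa using sum_le_of_pairwiseDisjoint_Ico _ hD.le t s (fun n _ => (hs n).1.le)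
      (fun n _ => ht n) fun i hi j hj hij =>
        hf i (mem_univ i) j (mem_univ j) hij ((mem_filter.1 hi).2.trans (mem_filter.1 hj).2.symm)
  · rintro ⟨f, hf⟩
    have hs₀ : ∀ n, 0 ≤ s n := fun n => (hs n).1.le
    refine ⟨stackStart f s, fun n => ⟨stackStart_nonneg hs₀ n,
      (stackStart_add_le_sum hs₀ n).trans (hf (f n))⟩, fun x _ => ?_⟩
    simpa using card_le_card_of_injOn f (fun _ _ => mem_coe.2 (mem_univ _))
      (stackStart_injOn_active hs₀ x)

/-- Off-line non-preemptive scheduling with max instantaneous power `m` (unit power per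
task, common window `[0, D]`) is equivalent to packing items of sizes `s n` into `m`
bins of capacity `D`. -/
theorem stmt_0 (N m : ℕ) (hN : 0 < N) (hm : 0 < m) (D : ℝ) (hD : 0 < D)
    (s : Fin N → ℝ) (hs : ∀ n, 0 < s n ∧ s n ≤ D) :
    (∃ t : Fin N → ℝ, (∀ n, 0 ≤ t n ∧ t n + s n ≤ D) ∧
        ∀ x ∈ Set.Ico (0 : ℝ) D,
          (Finset.univ.filter (fun n => t n ≤ x ∧ x < t n + s n)).card ≤ m) ↔
    (∃ f : Fin N → Fin m, ∀ j : Fin m,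
        ∑ n ∈ Finset.univ.filter (fun n => f n = j), s n ≤ D) :=
  stmt_0_general N m hm D hD s hs
end

section
/- Let N and m be positive integers and let a, b : Fin N → ℝ with a n < b n for every n. If for every real number x the number of indices n with x ∈ [a n, b n) is at most m, then there exists a coloring f : Fin N → Fin m such that any two distinct indices n ≠ n' with f n = f n' have disjoint intervals: [a n, b n) ∩ [a n', b n') = ∅. -/
/-!
Sweep the intervals by decreasing left endpoint. When the interval `[a i, b i)` with the largest
left endpoint is added, every interval already present that meets it contains the point `a i`,
so together with `[a i, b i)` itself there are at most `m` of them: a colour is always free.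
-/

open Finset

open scoped Classical in
theorem exists_fin_coloring_of_forall_exists_card_lt {ι : Type*} {r : ι → ι → Prop}
    (hr : ∀ i j, r i j → r j i) {m : ℕ} (hm : 0 < m) (s : Finset ι)
    (hdeg : ∀ t ⊆ s, t.Nonempty → ∃ i ∈ t, #{j ∈ t.erase i | r i j} < m) :
    ∃ f : ι → Fin m, ∀ i ∈ s, ∀ j ∈ s, i ≠ j → r i j → f i ≠ f j := by
  induction s using Finset.strongInduction with
  | H s ih =>
  rcases s.eq_empty_or_nonempty with rfl | hs
  · exact ⟨fun _ => ⟨0, hm⟩, by simp⟩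
  obtain ⟨i, his, hi⟩ := hdeg s subset_rfl hs
  obtain ⟨f, hf⟩ := ih (s.erase i) (erase_ssubset his) fun t ht =>
    hdeg t (ht.trans (erase_subset _ _))
  set conflicts := {j ∈ s.erase i | r i j}
  obtain ⟨c, -, hc⟩ : ∃ c ∈ (univ : Finset (Fin m)), c ∉ conflicts.image f :=
    exists_mem_notMem_of_card_lt_card <| by simpa using card_image_le.trans_lt hi
  have hfresh : ∀ j ∈ s.erase i, r i j → f j ≠ c := fun j hj hij hjc =>
    hc (mem_image.2 ⟨j, mem_filter.2 ⟨hj, hij⟩, hjc⟩)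
  refine ⟨Function.update f i c, fun j hj k hk hjk hrjk => ?_⟩
  rcases eq_or_ne j i with rfl | hji
  · rw [Function.update_self, Function.update_of_ne hjk.symm]
    exact (hfresh k (mem_erase.2 ⟨hjk.symm, hk⟩) hrjk).symm
  rcases eq_or_ne k i with rfl | hki
  · rw [Function.update_self, Function.update_of_ne hji]
    exact hfresh j (mem_erase.2 ⟨hji, hj⟩) (hr _ _ hrjk)
  rw [Function.update_of_ne hji, Function.update_of_ne hki]
  exact hf j (mem_erase.2 ⟨hji, hj⟩) k (mem_erase.2 ⟨hki, hk⟩) hjk hrjk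

theorem left_mem_Ico_of_not_disjoint {α : Type*} [LinearOrder α] {a₁ a₂ b₁ b₂ : α}
    (hb : b₁ ≤ a₁) (h : ¬Disjoint (Set.Ico a₁ a₂) (Set.Ico b₁ b₂)) : a₁ ∈ Set.Ico b₁ b₂ := by
  obtain ⟨x, hx₁, hx₂⟩ := Set.not_disjoint_iff.1 h
  exact ⟨hb, hx₁.1.trans_lt hx₂.2⟩

open scoped Classical in
theorem exists_card_not_disjoint_Ico_lt {ι α : Type*} [LinearOrder α] {a b : ι → α}
    (hab : ∀ i, a i < b i) {m : ℕ} {s : Finset ι}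
    (hcov : ∀ x, #{i ∈ s | a i ≤ x ∧ x < b i} ≤ m) {t : Finset ι} (hts : t ⊆ s)
    (ht : t.Nonempty) :
    ∃ i ∈ t, #{j ∈ t.erase i | ¬Disjoint (Set.Ico (a i) (b i)) (Set.Ico (a j) (b j))} < m := by
  obtain ⟨i, hit, hmax⟩ := t.exists_max_image a ht
  refine ⟨i, hit, lt_of_lt_of_le ?_ (hcov (a i))⟩
  calc #{j ∈ t.erase i | ¬Disjoint (Set.Ico (a i) (b i)) (Set.Ico (a j) (b j))}
      ≤ #({j ∈ s | a j ≤ a i ∧ a i < b j}.erase i) := by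
        refine card_le_card fun j hj => ?_
        obtain ⟨hj, hij⟩ := mem_filter.1 hj
        obtain ⟨hji, hjt⟩ := mem_erase.1 hj
        exact mem_erase.2 ⟨hji, mem_filter.2
          ⟨hts hjt, left_mem_Ico_of_not_disjoint (hmax j hjt) hij⟩⟩
    _ < #{j ∈ s | a j ≤ a i ∧ a i < b j} :=
        card_erase_lt_of_mem (mem_filter.2 ⟨hts hit, le_rfl, hab i⟩)

theorem stmt_1_general (N m : ℕ) (hm : 0 < m) (a b : Fin N → ℝ)
    (hab : ∀ n, a n < b n)
    (hcov : ∀ x : ℝ, (Finset.univ.filter (fun n => a n ≤ x ∧ x < b n)).card ≤ m) :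
    ∃ f : Fin N → Fin m, ∀ n n' : Fin N, n ≠ n' → f n = f n' →
      Set.Ico (a n) (b n) ∩ Set.Ico (a n') (b n') = ∅ := by
  obtain ⟨f, hf⟩ := exists_fin_coloring_of_forall_exists_card_lt
    (r := fun i j => ¬Disjoint (Set.Ico (a i) (b i)) (Set.Ico (a j) (b j)))
    (fun _ _ => mt fun h => h.symm) hm univ
    fun _ hts ht => by convert exists_card_not_disjoint_Ico_lt hab (by convert hcov) hts ht
  refine ⟨f, fun n n' hne hfe => Set.disjoint_iff_inter_eq_empty.1 ?_⟩
  by_contra h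
  exact hf n (mem_univ n) n' (mem_univ n') hne h hfe

/-- A family of half-open real intervals in which every point is covered by at most `m`
intervals can be colored with `m` colors so that same-colored intervals are disjoint. -/
theorem stmt_1 (N m : ℕ) (hN : 0 < N) (hm : 0 < m) (a b : Fin N → ℝ)
    (hab : ∀ n, a n < b n)
    (hcov : ∀ x : ℝ, (Finset.univ.filter (fun n => a n ≤ x ∧ x < b n)).card ≤ m) :
    ∃ f : Fin N → Fin m, ∀ n n' : Fin N, n ≠ n' → f n = f n' →
      Set.Ico (a n) (b n) ∩ Set.Ico (a n') (b n') = ∅ :=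
  stmt_1_general N m hm a b hab hcov
end

section
/- Fix an integer c ≥ 1, a real s > 0, and any function C : ℕ → ℝ. Let (λ_n) be a sequence of reals with 0 < λ_n < c·s for each n and λ_n → c·s, and for each n let q⁽ⁿ⁾ : ℕ → ℝ satisfy q⁽ⁿ⁾ i ≥ 0, Σ_i q⁽ⁿ⁾ i = 1, and the detailed balance equations λ_n · q⁽ⁿ⁾ i = min(i+1, c)·s · q⁽ⁿ⁾ (i+1) for every i. Then the expected cost Σ_i q⁽ⁿ⁾ i · C(min(i, c)) converges to C(c) as n → ∞. -/
/-!
Write `ρ = λ / (c s)`. Above level `c` detailed balance makes the stationary distribution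
geometric, `q (c + k) = ρ ^ k q c`, so `q c / (1 - ρ) ≤ 1`, i.e. `q c ≤ 1 - ρ`. Below level `c`
the service rate `j s` is at most `c s`, so `q j ≤ ρ⁻¹ ^ (c - j) q c ≤ ρ⁻¹ ^ (c - j) (1 - ρ)`.
As `ρ → 1` every state below `c` thus loses its mass, and the expected cost, which differs from
`C c` only through these finitely many states, tends to `C c`.
-/

open Filter Topology Finset

theorem le_one_sub_of_hasSum_of_geometric_tail {q : ℕ → ℝ} {ρ : ℝ} {m : ℕ}
    (hq : ∀ i, 0 ≤ q i) (hsum : HasSum q 1) (hρ0 : 0 ≤ ρ) (hρ1 : ρ < 1)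
    (htail : ∀ k, q (m + k) = ρ ^ k * q m) : q m ≤ 1 - ρ := by
  have hmass : q m / (1 - ρ) ≤ 1 :=
    calc q m / (1 - ρ) = ∑' k, q (m + k) := by
          simp_rw [htail, tsum_mul_right, tsum_geometric_of_lt_one hρ0 hρ1, div_eq_mul_inv,
            mul_comm]
      _ ≤ ∑' i, q i := tsum_comp_le_tsum_of_inj hsum.summable hq (add_right_injective m)
      _ = 1 := hsum.tsum_eq
  rwa [div_le_one (sub_pos.2 hρ1)] at hmass

theorem tsum_mul_comp_min_eq {q : ℕ → ℝ} (hsum : HasSum q 1) (f : ℕ → ℝ) (c : ℕ) :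
    ∑' i, q i * f (min i c) = f c + ∑ i ∈ range c, q i * (f i - f c) := by
  have hfin : ∀ i ∉ range c, q i * (f (min i c) - f c) = 0 := fun i hi => by
    rw [min_eq_right (by simpa using hi), sub_self, mul_zero]
  have hsplit := (hsum.mul_right (f c)).add (hasSum_sum_of_ne_finset_zero hfin)
  rw [one_mul] at hsplit
  calc ∑' i, q i * f (min i c) = ∑' i, (q i * f c + q i * (f (min i c) - f c)) := by
        congr 1; ext i; ring
    _ = f c + ∑ i ∈ range c, q i * (f (min i c) - f c) := hsplit.tsum_eq
    _ = f c + ∑ i ∈ range c, q i * (f i - f c) := by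
        congr 1
        refine sum_congr rfl fun i hi => ?_
        rw [min_eq_left (mem_range.1 hi).le]

section DetailedBalance

variable {q : ℕ → ℝ} {lam s : ℝ} {c : ℕ}

theorem tail_eq_geometric_of_detailedBalance (hcs : (c : ℝ) * s ≠ 0)
    (hdb : ∀ i, lam * q i = (min (i + 1) c : ℕ) * s * q (i + 1)) (k : ℕ) :
    q (c + k) = (lam / (c * s)) ^ k * q c := by
  induction k with
  | zero => simp
  | succ k ih =>
    have h := hdb (c + k)
    rw [show min (c + k + 1) c = c by omega] at h
    rw [← add_assoc, pow_succ, mul_right_comm, ← ih, mul_div_assoc', eq_div_iff hcs]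
    linarith

theorem pow_mul_le_pow_mul_of_detailedBalance (hlam : 0 ≤ lam) (hs : 0 ≤ s)
    (hq : ∀ i, 0 ≤ q i) (hdb : ∀ i, lam * q i = (min (i + 1) c : ℕ) * s * q (i + 1))
    {m : ℕ} (hm : m ≤ c) : lam ^ m * q (c - m) ≤ (c * s) ^ m * q c := by
  induction m with
  | zero => simp
  | succ m ih =>
    have h := hdb (c - (m + 1))
    rw [show c - (m + 1) + 1 = c - m by omega, min_eq_left (Nat.sub_le c m)] at h
    have hstep : lam * q (c - (m + 1)) ≤ c * s * q (c - m) := by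
      rw [h]
      exact mul_le_mul_of_nonneg_right
        (mul_le_mul_of_nonneg_right (by exact_mod_cast Nat.sub_le c m) hs) (hq _)
    calc lam ^ (m + 1) * q (c - (m + 1)) = lam ^ m * (lam * q (c - (m + 1))) := by ring
      _ ≤ lam ^ m * (c * s * q (c - m)) := by gcongr
      _ = c * s * (lam ^ m * q (c - m)) := by ring
      _ ≤ c * s * ((c * s) ^ m * q c) :=
          mul_le_mul_of_nonneg_left (ih (by omega)) (by positivity)
      _ = (c * s) ^ (m + 1) * q c := by ring

theorem apply_le_of_detailedBalance (hlam : 0 < lam) (hlt : lam < c * s) (hs : 0 ≤ s)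
    (hq : ∀ i, 0 ≤ q i) (hsum : HasSum q 1)
    (hdb : ∀ i, lam * q i = (min (i + 1) c : ℕ) * s * q (i + 1)) {j : ℕ} (hj : j ≤ c) :
    q j ≤ (c * s / lam) ^ (c - j) * (1 - lam / (c * s)) := by
  have hcs : 0 < (c : ℝ) * s := hlam.trans hlt
  have hqc : q c ≤ 1 - lam / (c * s) :=
    le_one_sub_of_hasSum_of_geometric_tail hq hsum (by positivity) ((div_lt_one hcs).2 hlt)
      (tail_eq_geometric_of_detailedBalance hcs.ne' hdb)
  have hdown := pow_mul_le_pow_mul_of_detailedBalance hlam.le hs hq hdb (Nat.sub_le c j)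
  rw [Nat.sub_sub_self hj] at hdown
  calc q j ≤ (c * s / lam) ^ (c - j) * q c := by
        rw [div_pow, div_mul_eq_mul_div, le_div_iff₀ (by positivity), mul_comm]
        exact hdown
    _ ≤ (c * s / lam) ^ (c - j) * (1 - lam / (c * s)) := by gcongr

end DetailedBalance

theorem tendsto_apply_zero_of_detailedBalance {c : ℕ} {s : ℝ} (hs : 0 ≤ s) {lam : ℕ → ℝ}
    (hlam : ∀ n, 0 < lam n ∧ lam n < c * s) (hlim : Tendsto lam atTop (𝓝 (c * s)))
    {q : ℕ → ℕ → ℝ} (hq : ∀ n i, 0 ≤ q n i) (hsum : ∀ n, HasSum (q n) 1)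
    (hdb : ∀ n i, lam n * q n i = (min (i + 1) c : ℕ) * s * q n (i + 1)) {j : ℕ} (hj : j ≤ c) :
    Tendsto (fun n => q n j) atTop (𝓝 0) := by
  have hcs : (c : ℝ) * s ≠ 0 := ((hlam 0).1.trans (hlam 0).2).ne'
  have hbound : Tendsto (fun n => (c * s / lam n) ^ (c - j) * (1 - lam n / (c * s))) atTop
      (𝓝 0) := by
    simpa [div_self hcs] using
      ((tendsto_const_nhds (x := (c : ℝ) * s)).div hlim hcs |>.pow (c - j)).mul
        ((tendsto_const_nhds (x := (1 : ℝ))).sub (hlim.div_const ((c : ℝ) * s)))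
  exact squeeze_zero (fun n => hq n j)
    (fun n => apply_le_of_detailedBalance (hlam n).1 (hlam n).2 hs (hq n) (hsum n) (hdb n) hj)
    hbound

theorem stmt_9_general (c : ℕ) (s : ℝ) (hs : 0 < s) (C : ℕ → ℝ)
    (lam : ℕ → ℝ) (hlam : ∀ n, 0 < lam n ∧ lam n < c * s)
    (hlim : Tendsto lam atTop (nhds (c * s)))
    (q : ℕ → ℕ → ℝ) (hq : ∀ n i, 0 ≤ q n i) (hsum : ∀ n, HasSum (q n) 1)
    (hdb : ∀ n i, lam n * q n i = (min (i + 1) c : ℕ) * s * q n (i + 1)) :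
    Tendsto (fun n => ∑' i : ℕ, q n i * C (min i c)) atTop (nhds (C c)) := by
  simp_rw [tsum_mul_comp_min_eq (hsum _) C c]
  have hgap : Tendsto (fun n => ∑ i ∈ range c, q n i * (C i - C c)) atTop (𝓝 0) := by
    simpa using tendsto_finsetSum (range c) fun i hi =>
      (tendsto_apply_zero_of_detailedBalance hs.le hlam hlim hq hsum hdb
        (mem_range.1 hi).le).mul_const (C i - C c)
  simpa using tendsto_const_nhds.add hgap

/-- Performance of the auxiliary M/M/c system as the occupation rate tends to 1: the
steady-state expected cost `Σ_i q⁽ⁿ⁾ i · C(min(i, c))` tends to `C c`. -/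
theorem stmt_9 (c : ℕ) (hc : 1 ≤ c) (s : ℝ) (hs : 0 < s) (C : ℕ → ℝ)
    (lam : ℕ → ℝ) (hlam : ∀ n, 0 < lam n ∧ lam n < c * s)
    (hlim : Tendsto lam atTop (nhds (c * s)))
    (q : ℕ → ℕ → ℝ) (hq : ∀ n i, 0 ≤ q n i) (hsum : ∀ n, HasSum (q n) 1)
    (hdb : ∀ n i, lam n * q n i = (min (i + 1) c : ℕ) * s * q n (i + 1)) :
    Tendsto (fun n => ∑' i : ℕ, q n i * C (min i c)) atTop (nhds (C c)) :=
  stmt_9_general c s hs C lam hlam hlim q hq hsum hdb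
end
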